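/- Relation between the stationary-state types: assume D^{(12)} ≠ 0. Call a two-species distribution ρ of type (b_i) (for i ∈ {1,2}, k := 3−i) if for some ι ≠ κ ∈ {1,2} it satisfies ρ^{(i)}(x_ι) = 0, v^{(i)}_{ικ} > 0 and v^{(k)}_{ικ} = 0; of type (c) if for some ι ≠ κ it satisfies ρ^{(1)}(x_ι) = ρ^{(2)}(x_ι) = 0, v^{(1)}_{ικ} > 0 and v^{(2)}_{ικ} > 0; and of type (d) if for some ι ≠ κ it satisfies ρ^{(1)}(x_ι) = 0, ρ^{(2)}(x_ι) = 1, v^{(1)}_{ικ} > 0 and v^{(2)}_{ικ} < 0. Then: if there exist distributions of type (c) and of type (d), then there exist distributions of type (b_1) and of type (b_2). Conversely, if there exist distributions of type (b_1) and of type (b_2), then either there exist distributions of both types (c) and (d), or there exist i ∈ {1,2} and α ∈ {(c),(d)} such that a distribution of type α exists and D^{(ii)} = −|D^{(12)}|. -/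
import Mathlib


open Finset

/-- The velocity `v^{(i)}_{ικ}` on the two-point space; `ρ k l` denotes the vertex *mass*
`ρ^{(k)}(x_l)`, so that `∑_λ (ΔK) ρ^{(k)}_λ μ_λ = ∑_l (ΔK) ρ k l`. -/
noncomputable def vel2 {d : ℕ} (x : Fin 2 → EuclideanSpace ℝ (Fin d))
    (K : Fin 2 → Fin 2 → EuclideanSpace ℝ (Fin d) → EuclideanSpace ℝ (Fin d) → ℝ)
    (ρ : Fin 2 → Fin 2 → ℝ) (i ι κ : Fin 2) : ℝ :=
  ∑ k : Fin 2, ∑ l : Fin 2, (K i k (x ι) (x l) - K i k (x κ) (x l)) * ρ k l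

/-- A two-species distribution on the two-point space, in terms of the vertex masses. -/
def IsDist2 (ρ : Fin 2 → Fin 2 → ℝ) : Prop :=
  (∀ i ι, 0 ≤ ρ i ι) ∧ ∀ i, ρ i 0 + ρ i 1 = 1

/-- Existence of a stationary state of type `b_i`: species `i` aggregated, the other
species `k` balanced. -/
def ExTypeB {d : ℕ} (x : Fin 2 → EuclideanSpace ℝ (Fin d))
    (K : Fin 2 → Fin 2 → EuclideanSpace ℝ (Fin d) → EuclideanSpace ℝ (Fin d) → ℝ)
    (i k : Fin 2) : Prop :=
  ∃ ρ, IsDist2 ρ ∧ ∃ ι κ : Fin 2, ι ≠ κ ∧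
    ρ i ι = 0 ∧ 0 < vel2 x K ρ i ι κ ∧ vel2 x K ρ k ι κ = 0

/-- Existence of a stationary state of type `c`: both species aggregated at the same
vertex. -/
def ExTypeC {d : ℕ} (x : Fin 2 → EuclideanSpace ℝ (Fin d))
    (K : Fin 2 → Fin 2 → EuclideanSpace ℝ (Fin d) → EuclideanSpace ℝ (Fin d) → ℝ) : Prop :=
  ∃ ρ, IsDist2 ρ ∧ ∃ ι κ : Fin 2, ι ≠ κ ∧
    ρ 0 ι = 0 ∧ ρ 1 ι = 0 ∧ 0 < vel2 x K ρ 0 ι κ ∧ 0 < vel2 x K ρ 1 ι κ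

/-- Existence of a stationary state of type `d`: the two species aggregated at opposite
vertices. -/
def ExTypeD {d : ℕ} (x : Fin 2 → EuclideanSpace ℝ (Fin d))
    (K : Fin 2 → Fin 2 → EuclideanSpace ℝ (Fin d) → EuclideanSpace ℝ (Fin d) → ℝ) : Prop :=
  ∃ ρ, IsDist2 ρ ∧ ∃ ι κ : Fin 2, ι ≠ κ ∧
    ρ 0 ι = 0 ∧ ρ 1 ι = 1 ∧ 0 < vel2 x K ρ 0 ι κ ∧ vel2 x K ρ 1 ι κ < 0

/-! ### Auxiliary real-number lemmas -/

private lemma aux_fwd_neg (A B C : ℝ) (hBneg : B < 0) (hA : A < B) (hC : C < B) :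
    ∃ t : ℝ, -1 ≤ t ∧ t ≤ 1 ∧ A < B*t ∧ C*t = B := by
  have hC0 : C < 0 := lt_trans hC hBneg
  have ht : C * (B / C) = B := by
    rw [mul_comm]; rw [div_mul_eq_mul_div, mul_div_assoc, div_self (ne_of_lt hC0), mul_one]
  refine ⟨B / C, ?_, ?_, ?_, ht⟩
  · have : 0 < B / C := div_pos_of_neg_of_neg hBneg hC0
    linarith
  · nlinarith [ht]
  · nlinarith [ht]

private lemma aux_fwd_pos (A B C : ℝ) (hBpos : 0 < B) (hA : A + B < 0) (hC : B + C < 0) :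
    ∃ t : ℝ, -1 ≤ t ∧ t ≤ 1 ∧ A < B*t ∧ C*t = B := by
  have hC0 : C < 0 := by linarith
  have ht : C * (B / C) = B := by
    rw [mul_comm]; rw [div_mul_eq_mul_div, mul_div_assoc, div_self (ne_of_lt hC0), mul_one]
  refine ⟨B / C, ?_, ?_, ?_, ht⟩
  · nlinarith [ht]
  · have : B / C < 0 := div_neg_of_pos_of_neg hBpos hC0
    linarith
  · nlinarith [ht]

private lemma aux_rev (A B C t1 t2 : ℝ) (hB : B ≠ 0)
    (ht1a : -1 ≤ t1) (ht1b : t1 ≤ 1) (h1A : A < B*t1) (h1C : C*t1 = B)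
    (ht2a : -1 ≤ t2) (ht2b : t2 ≤ 1) (h2C : C < B*t2) (h2A : A*t2 = B) :
    ((A+B<0 ∧ B+C<0) ∧ (A<B ∧ C<B)) ∨
    (((A+B<0 ∧ B+C<0) ∨ (A<B ∧ C<B)) ∧ (A = -|B| ∨ C = -|B|)) := by
  have hA0 : A ≠ 0 := by rintro rfl; simp at h2A; exact hB h2A.symm
  have hC0 : C ≠ 0 := by rintro rfl; simp at h1C; exact hB h1C.symm
  have ht1abs : |t1| ≤ 1 := abs_le.mpr ⟨ht1a, ht1b⟩
  have ht2abs : |t2| ≤ 1 := abs_le.mpr ⟨ht2a, ht2b⟩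
  have hBC : |B| ≤ |C| := by
    rw [← h1C, abs_mul]
    nlinarith [abs_nonneg C]
  have hBA : |B| ≤ |A| := by
    rw [← h2A, abs_mul]
    nlinarith [abs_nonneg A]
  rcases lt_or_gt_of_ne hB with hBneg | hBpos
  · -- B < 0
    rw [abs_of_neg hBneg] at hBA hBC
    have hA : A < 0 := by
      by_contra h
      push_neg at h
      have hA' : 0 < A := h.lt_of_ne' hA0
      have h1 : C < -B := by nlinarith
      rcases lt_or_gt_of_ne hC0 with hCn | hCp
      · have ht1 : 0 < t1 := by nlinarith
        nlinarith
      · rw [abs_of_pos hCp] at hBC; linarith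
    have hC : C < 0 := by
      by_contra h
      push_neg at h
      have hC' : 0 < C := h.lt_of_ne' hC0
      have h1 : A < -B := by nlinarith
      have ht2 : 0 < t2 := by nlinarith
      nlinarith
    rw [abs_of_neg hA] at hBA
    rw [abs_of_neg hC] at hBC
    have hAB : A ≤ B := by linarith
    have hCB : C ≤ B := by linarith
    rcases eq_or_lt_of_le hAB with hE | hAB'
    · exact Or.inr ⟨Or.inl ⟨by linarith, by linarith⟩,
        Or.inl (by rw [abs_of_neg hBneg]; linarith)⟩
    rcases eq_or_lt_of_le hCB with hE | hCB'
    · exact Or.inr ⟨Or.inl ⟨by linarith, by linarith⟩,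
        Or.inr (by rw [abs_of_neg hBneg]; linarith)⟩
    exact Or.inl ⟨⟨by linarith, by linarith⟩, hAB', hCB'⟩
  · -- B > 0
    rw [abs_of_pos hBpos] at hBA hBC
    have hA : A < 0 := by
      by_contra h
      push_neg at h
      have hA' : 0 < A := h.lt_of_ne' hA0
      rw [abs_of_pos hA'] at hBA
      have ht2 : 0 < t2 := by nlinarith
      have hCltB : C < B := by nlinarith
      have hC : C < 0 := by
        rcases le_or_gt 0 C with h' | h'
        · rw [abs_of_nonneg h'] at hBC; linarith
        · exact h'
      have ht1 : t1 < 0 := by nlinarith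
      nlinarith
    have hC : C < 0 := by
      by_contra h
      push_neg at h
      have hC' : 0 < C := h.lt_of_ne' hC0
      rw [abs_of_pos hC'] at hBC
      have ht1 : 0 < t1 := by nlinarith
      have hAltB : A < B := by nlinarith
      have ht2 : t2 < 0 := by nlinarith
      nlinarith
    rw [abs_of_neg hA] at hBA
    rw [abs_of_neg hC] at hBC
    have hAB : A + B ≤ 0 := by linarith
    have hCB : B + C ≤ 0 := by linarith
    rcases eq_or_lt_of_le hAB with hE | hAB'
    · exact Or.inr ⟨Or.inr ⟨by linarith, by linarith⟩,
        Or.inl (by rw [abs_of_pos hBpos]; linarith)⟩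
    rcases eq_or_lt_of_le hCB with hE | hCB'
    · exact Or.inr ⟨Or.inr ⟨by linarith, by linarith⟩,
        Or.inr (by rw [abs_of_pos hBpos]; linarith)⟩
    exact Or.inl ⟨⟨hAB', hCB'⟩, by linarith, by linarith⟩

/-! ### Translation lemmas: characterizations of the stationary types -/

section trans

set_option linter.unnecessarySeqFocus false

variable {d : ℕ} (x : Fin 2 → EuclideanSpace ℝ (Fin d))
    (K : Fin 2 → Fin 2 → EuclideanSpace ℝ (Fin d) → EuclideanSpace ℝ (Fin d) → ℝ)
    (D : Fin 2 → Fin 2 → ℝ)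
    (hkey : ∀ (ρ : Fin 2 → Fin 2 → ℝ) (i : Fin 2),
      vel2 x K ρ i 0 1 = D i 0 * (ρ 0 0 - ρ 0 1) + D i 1 * (ρ 1 0 - ρ 1 1))
    (hswap : ∀ (ρ : Fin 2 → Fin 2 → ℝ) (i : Fin 2), vel2 x K ρ i 1 0 = - vel2 x K ρ i 0 1)
    (hB10 : D 1 0 = D 0 1)

include hkey hswap hB10 in
private lemma exB0_iff :
    ExTypeB x K 0 1 ↔ ∃ t, -1 ≤ t ∧ t ≤ 1 ∧ D 0 0 < D 0 1 * t ∧ D 1 1 * t = D 0 1 := by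
  constructor
  · rintro ⟨ρ, ⟨hnn, hsum⟩, ι, κ, hne, h0, hv, hv0⟩
    have hs0 := hsum 0
    have hs1 := hsum 1
    have h10 := hnn 1 0
    have h11 := hnn 1 1
    fin_cases ι <;> fin_cases κ <;>
      simp only [Fin.zero_eta, Fin.mk_one] at h0 hne hv hv0
    · simp at hne
    · rw [hkey] at hv hv0
      have e1 : ρ 0 1 = 1 := by linarith
      rw [h0, e1] at hv hv0
      refine ⟨ρ 1 0 - ρ 1 1, by linarith, by linarith, by linarith, by linarith⟩
    · rw [hswap, hkey] at hv hv0
      have e1 : ρ 0 0 = 1 := by linarith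
      rw [h0, e1] at hv hv0
      refine ⟨ρ 1 1 - ρ 1 0, by linarith, by linarith, ?_, ?_⟩
      · have h : D 0 1 * (ρ 1 1 - ρ 1 0) = -(D 0 1 * (ρ 1 0 - ρ 1 1)) := by ring
        rw [h]; linarith
      · have h : D 1 1 * (ρ 1 1 - ρ 1 0) = -(D 1 1 * (ρ 1 0 - ρ 1 1)) := by ring
        rw [h]; linarith
    · simp at hne
  · rintro ⟨t, ht1, ht2, hA, hC⟩
    refine ⟨![![0,1], ![(t+1)/2, (1-t)/2]], ⟨?_, ?_⟩, 0, 1, by decide, by simp, ?_, ?_⟩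
    · intro i ι
      fin_cases i <;> fin_cases ι <;> norm_num <;> linarith
    · intro i; fin_cases i <;> norm_num <;> ring
    · rw [hkey]; norm_num; linarith
    · rw [hkey]; norm_num; linarith

include hkey hswap hB10 in
private lemma exB1_iff :
    ExTypeB x K 1 0 ↔ ∃ t, -1 ≤ t ∧ t ≤ 1 ∧ D 1 1 < D 0 1 * t ∧ D 0 0 * t = D 0 1 := by
  constructor
  · rintro ⟨ρ, ⟨hnn, hsum⟩, ι, κ, hne, h0, hv, hv0⟩
    have hs0 := hsum 0
    have hs1 := hsum 1
    have h10 := hnn 0 0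
    have h11 := hnn 0 1
    fin_cases ι <;> fin_cases κ <;>
      simp only [Fin.zero_eta, Fin.mk_one] at h0 hne hv hv0
    · simp at hne
    · rw [hkey] at hv hv0
      rw [hB10] at hv
      have e1 : ρ 1 1 = 1 := by linarith
      rw [h0, e1] at hv hv0
      refine ⟨ρ 0 0 - ρ 0 1, by linarith, by linarith, by linarith, by linarith⟩
    · rw [hswap, hkey] at hv hv0
      rw [hB10] at hv
      have e1 : ρ 1 0 = 1 := by linarith
      rw [h0, e1] at hv hv0
      refine ⟨ρ 0 1 - ρ 0 0, by linarith, by linarith, ?_, ?_⟩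
      · have h : D 0 1 * (ρ 0 1 - ρ 0 0) = -(D 0 1 * (ρ 0 0 - ρ 0 1)) := by ring
        rw [h]; linarith
      · have h : D 0 0 * (ρ 0 1 - ρ 0 0) = -(D 0 0 * (ρ 0 0 - ρ 0 1)) := by ring
        rw [h]; linarith
    · simp at hne
  · rintro ⟨t, ht1, ht2, hA, hC⟩
    refine ⟨![![(t+1)/2, (1-t)/2], ![0,1]], ⟨?_, ?_⟩, 0, 1, by decide, by simp, ?_, ?_⟩
    · intro i ι
      fin_cases i <;> fin_cases ι <;> norm_num <;> linarith
    · intro i; fin_cases i <;> norm_num <;> ring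
    · rw [hkey, hB10]; norm_num; linarith
    · rw [hkey]; norm_num; linarith

include hkey hswap hB10 in
private lemma exC_iff :
    ExTypeC x K ↔ D 0 0 + D 0 1 < 0 ∧ D 0 1 + D 1 1 < 0 := by
  constructor
  · rintro ⟨ρ, ⟨hnn, hsum⟩, ι, κ, hne, h0, h1, hv, hv1⟩
    have hs0 := hsum 0
    have hs1 := hsum 1
    fin_cases ι <;> fin_cases κ <;>
      simp only [Fin.zero_eta, Fin.mk_one] at h0 h1 hne hv hv1
    · simp at hne
    · rw [hkey] at hv hv1
      rw [hB10] at hv1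
      have e0 : ρ 0 1 = 1 := by linarith
      have e1 : ρ 1 1 = 1 := by linarith
      rw [h0, e0] at hv
      rw [h0, e0, h1, e1] at hv1
      rw [h1, e1] at hv
      constructor <;> nlinarith [hv, hv1]
    · rw [hswap, hkey] at hv hv1
      rw [hB10] at hv1
      have e0 : ρ 0 0 = 1 := by linarith
      have e1 : ρ 1 0 = 1 := by linarith
      rw [h0, e0, h1, e1] at hv hv1
      constructor <;> nlinarith [hv, hv1]
    · simp at hne
  · rintro ⟨hc1, hc2⟩
    refine ⟨![![0,1], ![0,1]], ⟨?_, ?_⟩, 0, 1, by decide, by simp, by simp, ?_, ?_⟩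
    · intro i ι; fin_cases i <;> fin_cases ι <;> norm_num
    · intro i; fin_cases i <;> norm_num
    · rw [hkey]; norm_num; linarith
    · rw [hkey, hB10]; norm_num; linarith

include hkey hswap hB10 in
private lemma exD_iff :
    ExTypeD x K ↔ D 0 0 < D 0 1 ∧ D 1 1 < D 0 1 := by
  constructor
  · rintro ⟨ρ, ⟨hnn, hsum⟩, ι, κ, hne, h0, h1, hv, hv1⟩
    have hs0 := hsum 0
    have hs1 := hsum 1
    fin_cases ι <;> fin_cases κ <;>
      simp only [Fin.zero_eta, Fin.mk_one] at h0 h1 hne hv hv1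
    · simp at hne
    · rw [hkey] at hv hv1
      rw [hB10] at hv1
      have e0 : ρ 0 1 = 1 := by linarith
      have e1 : ρ 1 1 = 0 := by linarith
      rw [h0, e0, h1, e1] at hv hv1
      constructor <;> nlinarith [hv, hv1]
    · rw [hswap, hkey] at hv hv1
      rw [hB10] at hv1
      have e0 : ρ 0 0 = 1 := by linarith
      have e1 : ρ 1 0 = 0 := by linarith
      rw [h0, e0, h1, e1] at hv hv1
      constructor <;> nlinarith [hv, hv1]
    · simp at hne
  · rintro ⟨hd1, hd2⟩
    refine ⟨![![0,1], ![1,0]], ⟨?_, ?_⟩, 0, 1, by decide, by simp, by simp, ?_, ?_⟩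
    · intro i ι; fin_cases i <;> fin_cases ι <;> norm_num
    · intro i; fin_cases i <;> norm_num
    · rw [hkey]; norm_num; linarith
    · rw [hkey, hB10]; norm_num; linarith

end trans

/-- Corollary 3.9: if stationary states of types `c` and `d` both exist, then stationary
states of types `b_1` and `b_2` exist; conversely, if types `b_1` and `b_2` both exist
then either types `c` and `d` both exist, or some type `α ∈ {c,d}` exists together with
`D^{(ii)} = −|D^{(12)}|` for some `i`. -/
theorem two_point_stationary_types_relation
    (d : ℕ) (x : Fin 2 → EuclideanSpace ℝ (Fin d)) (hx : x 0 ≠ x 1)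
    (μ : Fin 2 → ℝ) (hμ : ∀ ι, 0 < μ ι)
    (η12 : ℝ) (hη : 0 < η12)
    (K : Fin 2 → Fin 2 → EuclideanSpace ℝ (Fin d) → EuclideanSpace ℝ (Fin d) → ℝ)
    (hKsym : ∀ i k p q, K i k p q = K i k q p)
    (hK12 : ∀ p q, K 0 1 p q = K 1 0 p q)
    (hKdiag : ∀ i k : Fin 2, ∀ p q : EuclideanSpace ℝ (Fin d), K i k p p = K i k q q)
    (D : Fin 2 → Fin 2 → ℝ)
    (hD : ∀ i k, D i k = K i k (x 0) (x 0) - K i k (x 0) (x 1))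
    (hD12 : D 0 1 ≠ 0) :
    ((ExTypeC x K ∧ ExTypeD x K) → (ExTypeB x K 0 1 ∧ ExTypeB x K 1 0)) ∧
    ((ExTypeB x K 0 1 ∧ ExTypeB x K 1 0) →
      (ExTypeC x K ∧ ExTypeD x K) ∨
      (∃ i : Fin 2, (ExTypeC x K ∨ ExTypeD x K) ∧ D i i = -|D 0 1|)) := by
  have hkey : ∀ (ρ : Fin 2 → Fin 2 → ℝ) (i : Fin 2),
      vel2 x K ρ i 0 1 = D i 0 * (ρ 0 0 - ρ 0 1) + D i 1 * (ρ 1 0 - ρ 1 1) := by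
    intro ρ i
    simp only [vel2, Fin.sum_univ_two, hD]
    linear_combination (- ρ 0 0) * hKsym i 0 (x 1) (x 0) + (ρ 0 1) * hKdiag i 0 (x 0) (x 1)
      + (- ρ 1 0) * hKsym i 1 (x 1) (x 0) + (ρ 1 1) * hKdiag i 1 (x 0) (x 1)
  have hswap : ∀ (ρ : Fin 2 → Fin 2 → ℝ) (i : Fin 2),
      vel2 x K ρ i 1 0 = - vel2 x K ρ i 0 1 := by
    intro ρ i
    simp only [vel2, Fin.sum_univ_two]
    ring
  have hB10 : D 1 0 = D 0 1 := by
    rw [hD, hD, hK12, hK12]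
  have hC := exC_iff x K D hkey hswap hB10
  have hDiff := exD_iff x K D hkey hswap hB10
  have hb0 := exB0_iff x K D hkey hswap hB10
  have hb1 := exB1_iff x K D hkey hswap hB10
  constructor
  · rintro ⟨hc, hd⟩
    rw [hC] at hc
    rw [hDiff] at hd
    rw [hb0, hb1]
    rcases lt_or_gt_of_ne hD12 with hBneg | hBpos
    · exact ⟨aux_fwd_neg _ _ _ hBneg hd.1 hd.2,
        aux_fwd_neg _ _ _ hBneg hd.2 hd.1⟩
    · exact ⟨aux_fwd_pos _ _ _ hBpos hc.1 (by linarith [hc.2]),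
        aux_fwd_pos _ _ _ hBpos (by linarith [hc.2]) (by linarith [hc.1])⟩
  · rintro ⟨h1, h2⟩
    rw [hb0] at h1
    rw [hb1] at h2
    obtain ⟨t1, ht1a, ht1b, h1A, h1C⟩ := h1
    obtain ⟨t2, ht2a, ht2b, h2C, h2A⟩ := h2
    rcases aux_rev (D 0 0) (D 0 1) (D 1 1) t1 t2 hD12 ht1a ht1b h1A h1C ht2a ht2b h2C h2A
      with ⟨⟨hc1, hc2⟩, hd1, hd2⟩ | ⟨hcd, hii⟩
    · exact Or.inl ⟨hC.mpr ⟨hc1, by linarith⟩, hDiff.mpr ⟨hd1, hd2⟩⟩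
    · refine Or.inr ?_
      have hex : ExTypeC x K ∨ ExTypeD x K := by
        rcases hcd with ⟨hc1, hc2⟩ | ⟨hd1, hd2⟩
        · exact Or.inl (hC.mpr ⟨hc1, by linarith⟩)
        · exact Or.inr (hDiff.mpr ⟨hd1, hd2⟩)
      rcases hii with h | h
      · exact ⟨0, hex, h⟩
      · exact ⟨1, hex, h⟩
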